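/- arXiv:0706.4101 — 2 statements merged into one kernel-verified Lean document; each statement's English description precedes it below -/
import Mathlib

section
/- Let G be a graph on n ≥ 1 vertices with e edges and m triangles. Then G contains a bipartite subgraph with at least 4e^2/n^2 - 6m/n edges, i.e., b(G) ≥ 4e^2/n^2 - 6m/n. -/
/-!
For a vertex `x`, the cut between `N(x)` and its complement consists of the edges leaving
`N(x)`, so it has `∑_{u ∈ N(x)} deg u - 2 e(N(x))` edges. Summed over `x`, the first terms give
`∑ deg² ≥ (2e)² / n` (Cauchy–Schwarz) and the second ones count every triangle once for each
of its six orderings, i.e. `6m` in total. Some vertex therefore does at least as well as the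
average, `4e²/n² - 6m/n`.
-/

open Finset

namespace SimpleGraph

variable {V : Type*} [Fintype V] [DecidableEq V] (G : SimpleGraph V) [DecidableRel G.Adj]

/-- The number of edges of `G` crossing the cut `(S, Sᶜ)`. -/
def cutSize (S : Finset V) : ℕ :=
  ((S ×ˢ Sᶜ).filter fun p => G.Adj p.1 p.2).card

/-- `b(G)`: the maximum number of edges in a bipartite subgraph of `G`,
equivalently the maximum over vertex subsets `S` of the number of edges
between `S` and its complement. -/
def maxCut : ℕ := Finset.univ.sup fun S : Finset V => G.cutSize S

/-- The number of edges of `G` with both endpoints in `S`. -/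
def spanEdges (S : Finset V) : ℕ :=
  (G.edgeFinset.filter fun e => e ∈ S.sym2).card

end SimpleGraph

namespace Finset

lemma card_filter_pairwise_ne_product {α : Type*} [DecidableEq α] (s : Finset α) :
    #{t ∈ s ×ˢ s ×ˢ s | t.1 ≠ t.2.1 ∧ t.1 ≠ t.2.2 ∧ t.2.1 ≠ t.2.2} =
      #s * ((#s - 1) * (#s - 2)) := by
  rw [card_filter, sum_product, ← smul_eq_mul, ← sum_const]
  refine sum_congr rfl fun x hx => ?_
  rw [← card_filter, show #s - 2 = #s - 1 - 1 by omega, Nat.mul_sub_one,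
    ← card_erase_of_mem hx, ← offDiag_card]
  congr 1
  ext ⟨u, v⟩
  simp only [mem_filter, mem_product, mem_offDiag, mem_erase]
  tauto

end Finset

namespace SimpleGraph

variable {V : Type*} [Fintype V] [DecidableEq V] (G : SimpleGraph V) [DecidableRel G.Adj]

lemma cutSize_eq_sum_card_sdiff (S : Finset V) :
    G.cutSize S = ∑ u ∈ S, #(G.neighborFinset u \ S) := by
  rw [cutSize, card_filter, sum_product]
  refine sum_congr rfl fun u _ => ?_
  rw [← card_filter]
  congr 1
  ext v
  simp [and_comm]

lemma cutSize_add_sum_card_inter (S : Finset V) :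
    G.cutSize S + ∑ u ∈ S, #(G.neighborFinset u ∩ S) = ∑ u ∈ S, G.degree u := by
  simp only [cutSize_eq_sum_card_sdiff, ← sum_add_distrib, card_sdiff_add_card_inter,
    card_neighborFinset_eq_degree]

omit [DecidableEq V] in
lemma sum_sum_neighborFinset {M : Type*} [AddCommMonoid M] (f : V → M) :
    ∑ x, ∑ u ∈ G.neighborFinset x, f u = ∑ u, G.degree u • f u := by
  simp_rw [neighborFinset_eq_filter, sum_filter]
  rw [sum_comm]
  refine sum_congr rfl fun u _ => ?_
  simp_rw [G.adj_comm _ u, ← sum_filter, sum_const, ← neighborFinset_eq_filter,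
    card_neighborFinset_eq_degree]

def orderedTriangles : Finset (V × V × V) :=
  {t | G.Adj t.1 t.2.1 ∧ G.Adj t.1 t.2.2 ∧ G.Adj t.2.1 t.2.2}

lemma sum_sum_card_inter_neighborFinset :
    ∑ x, ∑ u ∈ G.neighborFinset x, #(G.neighborFinset u ∩ G.neighborFinset x) =
      #G.orderedTriangles := by
  rw [orderedTriangles, card_filter, Fintype.sum_prod_type]
  refine sum_congr rfl fun x _ => ?_
  rw [Fintype.sum_prod_type, neighborFinset_eq_filter, sum_filter]
  refine sum_congr rfl fun u _ => ?_
  split_ifs with hxu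
  · rw [← card_filter]
    congr 1
    ext v
    simp [hxu, and_comm]
  · simp [hxu]

lemma filter_orderedTriangles_eq (s : Finset V) (hs : s ∈ G.cliqueFinset 3) :
    {t ∈ G.orderedTriangles | ({t.1, t.2.1, t.2.2} : Finset V) = s} =
      {t ∈ s ×ˢ s ×ˢ s | t.1 ≠ t.2.1 ∧ t.1 ≠ t.2.2 ∧ t.2.1 ≠ t.2.2} := by
  rw [mem_cliqueFinset_iff] at hs
  ext ⟨a, b, c⟩
  simp only [orderedTriangles, mem_filter, mem_univ, true_and, mem_product]
  constructor
  · rintro ⟨⟨hab, hac, hbc⟩, rfl⟩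
    simp [hab.ne, hac.ne, hbc.ne]
  · rintro ⟨⟨ha, hb, hc⟩, hab, hac, hbc⟩
    refine ⟨⟨hs.1 ha hb hab, hs.1 ha hc hac, hs.1 hb hc hbc⟩, ?_⟩
    refine eq_of_subset_of_card_le (by simp [insert_subset_iff, ha, hb, hc]) ?_
    rw [hs.2, card_eq_three.2 ⟨a, b, c, hab, hac, hbc, rfl⟩]

lemma card_orderedTriangles : #G.orderedTriangles = 6 * #(G.cliqueFinset 3) := by
  have maps_to : ∀ t ∈ G.orderedTriangles, ({t.1, t.2.1, t.2.2} : Finset V) ∈ G.cliqueFinset 3 :=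
    fun t ht ↦ mem_cliqueFinset_iff.2 <| is3Clique_triple_iff.2 <| by
      simpa [orderedTriangles] using ht
  rw [card_eq_sum_card_fiberwise maps_to, sum_congr rfl fun s hs ↦ ?_, sum_const, smul_eq_mul,
    mul_comm]
  rw [G.filter_orderedTriangles_eq s hs, card_filter_pairwise_ne_product,
    (mem_cliqueFinset_iff.1 hs).2]

lemma cutSize_le_maxCut (S : Finset V) : G.cutSize S ≤ G.maxCut :=
  le_sup (mem_univ S)

lemma sum_cutSize_neighborFinset_add_six_mul_card_cliqueFinset :
    ∑ x, G.cutSize (G.neighborFinset x) + 6 * #(G.cliqueFinset 3) = ∑ u, G.degree u ^ 2 := by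
  rw [← card_orderedTriangles, ← sum_sum_card_inter_neighborFinset, ← sum_add_distrib]
  simp_rw [cutSize_add_sum_card_inter, sum_sum_neighborFinset, smul_eq_mul, sq]

lemma four_mul_sq_card_edgeFinset_le :
    4 * #G.edgeFinset ^ 2 ≤
      Fintype.card V * (Fintype.card V * G.maxCut + 6 * #(G.cliqueFinset 3)) :=
  calc 4 * #G.edgeFinset ^ 2 = (∑ u, G.degree u) ^ 2 := by
        rw [sum_degrees_eq_twice_card_edges]; ring
    _ ≤ Fintype.card V * ∑ u, G.degree u ^ 2 := sq_sum_le_card_mul_sum_sq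
    _ = Fintype.card V * (∑ x, G.cutSize (G.neighborFinset x) + 6 * #(G.cliqueFinset 3)) := by
        rw [sum_cutSize_neighborFinset_add_six_mul_card_cliqueFinset]
    _ ≤ Fintype.card V * (Fintype.card V * G.maxCut + 6 * #(G.cliqueFinset 3)) := by
        gcongr
        simpa using sum_le_card_nsmul univ _ _ fun x _ => G.cutSize_le_maxCut (G.neighborFinset x)

end SimpleGraph

theorem max_cut_lower_bound_triangles_general {V : Type*} [Fintype V] [DecidableEq V]
    (G : SimpleGraph V) [DecidableRel G.Adj] :
    4 * (G.edgeFinset.card : ℝ) ^ 2 / (Fintype.card V : ℝ) ^ 2 -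
      6 * ((G.cliqueFinset 3).card : ℝ) / (Fintype.card V : ℝ) ≤ G.maxCut := by
  set n := Fintype.card V
  obtain h0 | hpos := n.eq_zero_or_pos
  · simp [h0] -- with no vertices both fractions are junk divisions by zero
  have h_count : (4 * #G.edgeFinset ^ 2 : ℝ) ≤ n * (n * G.maxCut + 6 * #(G.cliqueFinset 3)) := by
    exact_mod_cast G.four_mul_sq_card_edgeFinset_le
  have hn : (0 : ℝ) < n := by exact_mod_cast hpos
  calc 4 * (#G.edgeFinset : ℝ) ^ 2 / n ^ 2 - 6 * #(G.cliqueFinset 3) / n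
      ≤ n * (n * G.maxCut + 6 * #(G.cliqueFinset 3)) / n ^ 2 - 6 * #(G.cliqueFinset 3) / n := by
        gcongr
    _ = (G.maxCut : ℝ) := by field_simp; ring

/-- A graph on `n ≥ 1` vertices with `e` edges and `m` triangles contains a bipartite
subgraph with at least `4e²/n² - 6m/n` edges. -/
theorem max_cut_lower_bound_triangles {V : Type*} [Fintype V] [DecidableEq V]
    (G : SimpleGraph V) [DecidableRel G.Adj] (hn : 1 ≤ Fintype.card V) :
    4 * (G.edgeFinset.card : ℝ) ^ 2 / (Fintype.card V : ℝ) ^ 2 -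
      6 * ((G.cliqueFinset 3).card : ℝ) / (Fintype.card V : ℝ) ≤ G.maxCut :=
  max_cut_lower_bound_triangles_general G
end

section
/- Let G be the complete 3-partite graph on n = 3m vertices with three parts of size m each. Then G cannot be made bipartite by deleting fewer than m^2 = n^2/9 edges; that is, e(G) - b(G) ≥ n^2/9. -/
open Finset

/-! Every vertex of the complete 3-partite graph with parts of size `m` has degree `2m`, so
it has `3m²` edges. If a set `S` meets the parts in `a₀, a₁, a₂` vertices and its complement
in `b₀, b₁, b₂` (so `aᵢ + bᵢ = m`), the cut `(S, Sᶜ)` consists of the `(∑ aᵢ)(∑ bᵢ)` pairs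
across it minus the `∑ aᵢ bᵢ` pairs inside one part, and an elementary inequality bounds
this by `2m²`. -/

theorem Finset.card_filter_add_card_compl_filter {α : Type*} [Fintype α] [DecidableEq α]
    (S : Finset α) (p : α → Prop) [DecidablePred p] :
    #{x ∈ S | p x} + #{x ∈ Sᶜ | p x} = #{x | p x} := by
  rw [← card_union_of_disjoint (disjoint_filter_filter disjoint_compl_right), ← filter_union,
    union_compl]

namespace SimpleGraph

variable {V ι : Type*} [Fintype V] [DecidableEq ι] {G : SimpleGraph V} [DecidableRel G.Adj]
  {f : V → ι}

theorem degree_eq_card_sub_card_fiber (hadj : ∀ u v : V, G.Adj u v ↔ f u ≠ f v) (v : V) :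
    G.degree v = Fintype.card V - #{u | f u = f v} := by
  have hnbr : G.neighborFinset v = ({u | f u ≠ f v} : Finset V) := by
    ext u
    simp only [mem_neighborFinset, hadj, mem_filter, mem_univ, true_and, ne_comm]
  rw [← card_neighborFinset_eq_degree, hnbr, ← card_univ,
    ← card_filter_add_card_filter_not (s := univ) (fun u => f u = f v)]
  simp only [ne_eq, Nat.add_sub_cancel_left]

theorem cutSize_add_sum_card_mul_card [DecidableEq V] [Fintype ι]
    (hadj : ∀ u v : V, G.Adj u v ↔ f u ≠ f v) (S : Finset V) :
    G.cutSize S + ∑ i, #{v ∈ S | f v = i} * #{v ∈ Sᶜ | f v = i} =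
      #S * #Sᶜ := by
  have hsame : #{p ∈ S ×ˢ Sᶜ | f p.1 = f p.2} =
      ∑ i, #{v ∈ S | f v = i} * #{v ∈ Sᶜ | f v = i} := by
    rw [card_eq_sum_card_fiberwise (f := fun p : V × V => f p.1) (t := univ)
      fun _ _ => mem_univ _]
    refine sum_congr rfl fun i _ => ?_
    rw [← card_product, filter_filter]
    congr 1
    ext ⟨u, w⟩
    simp only [mem_filter, mem_product]
    constructor
    · rintro ⟨⟨hu, hw⟩, huw, hi⟩
      exact ⟨⟨hu, hi⟩, hw, huw ▸ hi⟩
    · rintro ⟨⟨hu, hi⟩, hw, hj⟩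
      exact ⟨⟨hu, hw⟩, hi.trans hj.symm, hi⟩
  rw [← hsame, cutSize, ← card_product,
    ← card_filter_add_card_filter_not (s := S ×ˢ Sᶜ) (fun p => G.Adj p.1 p.2)]
  simp only [hadj, not_not]

end SimpleGraph

/-- The slack is `2 (b₀ (m - a₁ - a₂) + a₁ a₂)` when `a₁ + a₂ ≤ m`, and
`2 (a₀ (a₁ + a₂ - m) + b₁ b₂)` otherwise. -/
theorem sum_mul_sum_le_of_add_eq {m : ℕ} (a b : Fin 3 → ℕ) (hab : ∀ i, a i + b i = m) :
    (∑ i, a i) * (∑ i, b i) ≤ 2 * m ^ 2 + ∑ i, a i * b i := by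
  simp only [Fin.sum_univ_three]
  have := hab 0
  have := hab 1
  have := hab 2
  rcases le_total (a 1 + a 2) m with h | h
  · nlinarith [Nat.mul_le_mul_left (b 0) h]
  · nlinarith [Nat.mul_le_mul_left (a 0) h]

/-- The complete 3-partite graph on `n = 3m` vertices with three parts of size `m`
cannot be made bipartite by deleting fewer than `m² = n²/9` edges:
`e(G) - b(G) ≥ n²/9`. -/
theorem complete_tripartite_max_cut {V : Type*} [Fintype V] [DecidableEq V]
    (G : SimpleGraph V) [DecidableRel G.Adj] (m : ℕ) (hn : Fintype.card V = 3 * m)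
    (f : V → Fin 3)
    (hparts : ∀ i : Fin 3, (Finset.univ.filter fun v => f v = i).card = m)
    (hadj : ∀ u v : V, G.Adj u v ↔ f u ≠ f v) :
    (m : ℝ) ^ 2 ≤ (G.edgeFinset.card : ℝ) - G.maxCut := by
  have hedges : #G.edgeFinset = 3 * m ^ 2 := by
    have hdeg : ∀ v, G.degree v = 2 * m := fun v => by
      rw [SimpleGraph.degree_eq_card_sub_card_fiber hadj, hparts, hn]
      omega
    have := G.sum_degrees_eq_twice_card_edges
    simp only [hdeg, sum_const, card_univ, hn, smul_eq_mul] at this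
    nlinarith
  have hcut : G.maxCut ≤ 2 * m ^ 2 := Finset.sup_le fun S _ => by
    have hsplit := SimpleGraph.cutSize_add_sum_card_mul_card hadj S
    have hfibers := sum_mul_sum_le_of_add_eq (fun i => #{v ∈ S | f v = i})
      (fun i => #{v ∈ Sᶜ | f v = i})
      fun i => (card_filter_add_card_compl_filter S _).trans (hparts i)
    rw [← card_eq_sum_card_fiberwise fun _ _ => mem_univ _,
      ← card_eq_sum_card_fiberwise fun _ _ => mem_univ _] at hfibers
    omega
  rw [hedges]
  push_cast
  have : (G.maxCut : ℝ) ≤ 2 * m ^ 2 := by exact_mod_cast hcut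
  linarith
end
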